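/- arXiv:0912.1902 — 6 statements merged into one kernel-verified Lean document; each statement's English description precedes it below -/
import Mathlib

section
/- Let A be an n×n labeled transition matrix over an action set 𝒜, ρ a boolean termination column vector, V a boolean n×N collector, and U, U' two distributors for V. If VUAV = AV and VUρ = ρ, then also VU'AV = AV and VU'ρ = ρ, and moreover U'AV = UAV and U'ρ = Uρ. Hence the strong-bisimulation conditions and the lumped system (UAV, Uρ) do not depend on the choice of distributor. -/
open Matrix

instance : CommSemiring Prop where
  add a b := a ∨ b
  add_assoc a b c := propext or_assoc
  zero := False
  zero_add a := false_or a
  add_zero a := or_false a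
  add_comm a b := propext or_comm
  nsmul n p := n ≠ 0 ∧ p
  nsmul_zero p := by show ((0:ℕ) ≠ 0 ∧ p) = False; simp
  nsmul_succ n p := by
    show ((n + 1 : ℕ) ≠ 0 ∧ p) = ((n ≠ 0 ∧ p) ∨ p)
    by_cases h : n = 0 <;> simp [h]
  mul a b := a ∧ b
  mul_assoc a b c := propext and_assoc
  one := True
  one_mul a := true_and a
  mul_one a := and_true a
  left_distrib a b c := propext and_or_left
  right_distrib a b c := propext or_and_right
  zero_mul a := false_and a
  mul_zero a := and_false a
  mul_comm a b := propext and_comm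

instance {α : Type*} : CommSemiring (Set α) where
  add a b := a ∪ b
  add_assoc := Set.union_assoc
  zero := (∅ : Set α)
  zero_add := Set.empty_union
  add_zero := Set.union_empty
  add_comm := Set.union_comm
  nsmul n s := {x ∈ s | n ≠ 0}
  nsmul_zero s := by show {x ∈ s | (0:ℕ) ≠ 0} = (∅ : Set α); simp
  nsmul_succ n s := by
    show {x ∈ s | (n + 1 : ℕ) ≠ 0} = {x ∈ s | n ≠ 0} ∪ s
    by_cases h : n = 0 <;> ext x <;> simp [h]
  mul a b := a ∩ b
  mul_assoc := Set.inter_assoc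
  one := (Set.univ : Set α)
  one_mul := Set.univ_inter
  mul_one := Set.inter_univ
  left_distrib := Set.inter_union_distrib_left
  right_distrib := Set.union_inter_distrib_right
  zero_mul := Set.empty_inter
  mul_zero := Set.inter_empty
  mul_comm := Set.inter_comm

/-- The all-ones boolean column vector. -/
def onesB (n : ℕ) : Matrix (Fin n) (Fin 1) Prop := Matrix.of fun _ _ => True

/-- Embedding of boolean matrices into `Set 𝒜`-labeled matrices:
a `True` entry becomes the full action set, a `False` entry the empty set. -/
def emb (𝒜 : Type*) {m p : Type*} (M : Matrix m p Prop) : Matrix m p (Set 𝒜) :=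
  Matrix.of fun i j => {_a : 𝒜 | M i j}

section FixedPoint

variable {R : Type*} [Semiring R] {m k l : Type*} [Fintype m] [Fintype k] [DecidableEq k]

/- `X = V * (U * X)` lies in the image of `V`, on which all left inverses of `V` agree. -/
theorem Matrix.mul_eq_mul_of_mul_mul_eq_self {V : Matrix m k R} {U U' : Matrix k m R}
    {X : Matrix m l R} (hX : V * U * X = X) (hU' : U' * V = 1) : U' * X = U * X := by
  calc U' * X = U' * V * (U * X) := by rw [Matrix.mul_assoc, ← Matrix.mul_assoc V, hX]
    _ = U * X := by rw [hU', Matrix.one_mul]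

theorem Matrix.mul_mul_eq_self_of_left_inv {V : Matrix m k R} {U U' : Matrix k m R}
    {X : Matrix m l R} (hX : V * U * X = X) (hU' : U' * V = 1) : V * U' * X = X := by
  rw [Matrix.mul_assoc, mul_eq_mul_of_mul_mul_eq_self hX hU', ← Matrix.mul_assoc, hX]

end FixedPoint

def embHom (𝒜 : Type*) : Prop →+* Set 𝒜 where
  toFun p := {_a : 𝒜 | p}
  map_one' := Set.ofPred_true
  map_mul' _ _ := Set.ofPred_and
  map_zero' := Set.ofPred_false
  map_add' _ _ := Set.ofPred_or

theorem emb_eq_map {𝒜 m p : Type*} (M : Matrix m p Prop) : emb 𝒜 M = M.map (embHom 𝒜) :=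
  rfl

theorem emb_mul {𝒜 m p q : Type*} [Fintype p] (M : Matrix m p Prop) (N : Matrix p q Prop) :
    emb 𝒜 (M * N) = emb 𝒜 M * emb 𝒜 N := by
  simp only [emb_eq_map, Matrix.map_mul]

theorem emb_one {𝒜 m : Type*} [Fintype m] [DecidableEq m] :
    emb 𝒜 (1 : Matrix m m Prop) = 1 := by
  rw [emb_eq_map, Matrix.map_one (embHom 𝒜) (map_zero _) (map_one _)]

theorem strong_bisim_distributor_irrelevant_general {n N : ℕ} {𝒜 : Type*}
    (A : Matrix (Fin n) (Fin n) (Set 𝒜)) (ρ : Matrix (Fin n) (Fin 1) Prop)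
    (V : Matrix (Fin n) (Fin N) Prop) (U U' : Matrix (Fin N) (Fin n) Prop)
    (hU'₂ : U' * V = 1)
    (hA : emb 𝒜 V * emb 𝒜 U * A * emb 𝒜 V = A * emb 𝒜 V)
    (hρ : V * U * ρ = ρ) :
    emb 𝒜 V * emb 𝒜 U' * A * emb 𝒜 V = A * emb 𝒜 V ∧ V * U' * ρ = ρ ∧
      emb 𝒜 U' * A * emb 𝒜 V = emb 𝒜 U * A * emb 𝒜 V ∧ U' * ρ = U * ρ := by
  have hAV : emb 𝒜 V * emb 𝒜 U * (A * emb 𝒜 V) = A * emb 𝒜 V := by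
    rw [← Matrix.mul_assoc, hA]
  have hU'V : emb 𝒜 U' * emb 𝒜 V = 1 := by rw [← emb_mul, hU'₂, emb_one]
  refine ⟨?_, mul_mul_eq_self_of_left_inv hρ hU'₂, ?_, mul_eq_mul_of_mul_mul_eq_self hρ hU'₂⟩
  · rw [Matrix.mul_assoc _ A, mul_mul_eq_self_of_left_inv hAV hU'V]
  · rw [Matrix.mul_assoc _ A, Matrix.mul_assoc _ A, mul_eq_mul_of_mul_mul_eq_self hAV hU'V]

/-- the strong-bisimulation conditions and the lumped system do not
depend on the choice of distributor. -/
theorem strong_bisim_distributor_irrelevant {n N : ℕ} {𝒜 : Type*}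
    (A : Matrix (Fin n) (Fin n) (Set 𝒜)) (ρ : Matrix (Fin n) (Fin 1) Prop)
    (V : Matrix (Fin n) (Fin N) Prop) (U U' : Matrix (Fin N) (Fin n) Prop)
    (hV : ∀ i, ∃! j, V i j)
    (hU₁ : U * onesB n = onesB N) (hU₂ : U * V = 1)
    (hU'₁ : U' * onesB n = onesB N) (hU'₂ : U' * V = 1)
    (hA : emb 𝒜 V * emb 𝒜 U * A * emb 𝒜 V = A * emb 𝒜 V)
    (hρ : V * U * ρ = ρ) :
    emb 𝒜 V * emb 𝒜 U' * A * emb 𝒜 V = A * emb 𝒜 V ∧ V * U' * ρ = ρ ∧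
      emb 𝒜 U' * A * emb 𝒜 V = emb 𝒜 U * A * emb 𝒜 V ∧ U' * ρ = U * ρ :=
  strong_bisim_distributor_irrelevant_general A ρ V U U' hU'₂ hA hρ
end

section
/- Let A be an n×n labeled transition matrix over an action set 𝒜, ρ a boolean termination column vector, and V a surjective boolean n×N collector. Put R = VVᵀ. Then the strong-bisimulation conditions VVᵀAV = AV and VVᵀρ = ρ hold if and only if RA ≤ AR and Rρ ≤ ρ (entrywise order, i.e. entrywise set inclusion). -/
open Matrix

/-! Taking the entries of a labeled matrix at one action `a` is a semiring map `Set 𝒜 → Prop`,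
so both conditions on `A` may be checked one action at a time on boolean matrices. For a
collector `V` one has `1 ≤ VVᵀ` and `VᵀV ≤ 1`, and with `R = VVᵀ` monotonicity of the product
gives `RB ≤ RBR = BR` from `RBV = BV`, and `RBV ≤ BRV = BV(VᵀV) ≤ BV ≤ RBV` from `RB ≤ BR`;
likewise `ρ ≤ Rρ`, so `Rρ = ρ` amounts to `Rρ ≤ ρ`. -/

theorem Finset.prop_sum_iff {ι : Type*} (s : Finset ι) (p : ι → Prop) :
    (∑ i ∈ s, p i) ↔ ∃ i ∈ s, p i := by
  classical
  induction s using Finset.cons_induction with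
  | empty => exact ⟨False.elim, fun ⟨_, h, _⟩ => absurd h (Finset.notMem_empty _)⟩
  | cons x s hx ih =>
    rw [Finset.sum_cons, Finset.cons_eq_insert, Finset.exists_mem_insert]
    exact or_congr_right ih

def Set.memRingHom {α : Type*} (a : α) : Set α →+* Prop where
  toFun s := a ∈ s
  map_one' := rfl
  map_mul' _ _ := rfl
  map_zero' := rfl
  map_add' _ _ := rfl

namespace Matrix

variable {l m n : Type*}

instance : PartialOrder (Matrix m n Prop) := inferInstanceAs (PartialOrder (m → n → Prop))

theorem prop_mul_apply [Fintype m] (M : Matrix l m Prop) (N : Matrix m n Prop) (i : l) (k : n) :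
    (M * N) i k ↔ ∃ j, M i j ∧ N j k := by
  rw [mul_apply, Finset.prop_sum_iff]
  simp only [Finset.mem_univ, true_and]
  rfl

theorem prop_one_apply [DecidableEq m] (i j : m) : (1 : Matrix m m Prop) i j ↔ i = j := by
  rw [one_apply]
  split_ifs with h
  · exact iff_of_true trivial h
  · exact iff_of_false id h

theorem prop_mul_le_mul [Fintype m] {M M' : Matrix l m Prop} {N N' : Matrix m n Prop}
    (hM : M ≤ M') (hN : N ≤ N') : M * N ≤ M' * N' := fun i k h => by
  obtain ⟨j, hij, hjk⟩ := (prop_mul_apply M N i k).1 h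
  exact (prop_mul_apply M' N' i k).2 ⟨j, hM i j hij, hN j k hjk⟩

theorem one_le_mul_transpose [DecidableEq l] [Fintype m] {V : Matrix l m Prop}
    (hV : ∀ i, ∃ j, V i j) : 1 ≤ V * Vᵀ := fun i i' h => by
  obtain ⟨j, hj⟩ := hV i
  rw [(prop_one_apply i i').1 h] at hj ⊢
  exact (prop_mul_apply _ _ _ _).2 ⟨j, hj, hj⟩

theorem transpose_mul_le_one [Fintype l] [DecidableEq m] {V : Matrix l m Prop}
    (hV : ∀ i j j', V i j → V i j' → j = j') : Vᵀ * V ≤ 1 := fun j j' h => by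
  obtain ⟨i, hj, hj'⟩ := (prop_mul_apply _ _ _ _).1 h
  exact (prop_one_apply j j').2 (hV i j j' hj hj')

theorem mul_eq_self_iff_le [Fintype m] [DecidableEq m] {R : Matrix m m Prop}
    {ρ : Matrix m n Prop} (hR : 1 ≤ R) : R * ρ = ρ ↔ R * ρ ≤ ρ := by
  refine ⟨le_of_eq, fun h => le_antisymm h ?_⟩
  calc ρ = 1 * ρ := (Matrix.one_mul ρ).symm
    _ ≤ R * ρ := prop_mul_le_mul hR le_rfl

theorem mul_transpose_mul_mul_eq_iff [Fintype m] [DecidableEq m] [Fintype n] [DecidableEq n]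
    {V : Matrix m n Prop} (B : Matrix m m Prop) (h₁ : 1 ≤ V * Vᵀ) (h₂ : Vᵀ * V ≤ 1) :
    V * Vᵀ * B * V = B * V ↔ V * Vᵀ * B ≤ B * (V * Vᵀ) := by
  constructor
  · intro h
    calc V * Vᵀ * B = V * Vᵀ * B * 1 := (Matrix.mul_one _).symm
      _ ≤ V * Vᵀ * B * (V * Vᵀ) := prop_mul_le_mul le_rfl h₁
      _ = B * (V * Vᵀ) := by rw [← Matrix.mul_assoc, h, Matrix.mul_assoc]
  · intro h
    refine le_antisymm ?_ ?_
    · calc V * Vᵀ * B * V ≤ B * (V * Vᵀ) * V := prop_mul_le_mul h le_rfl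
        _ = B * V * (Vᵀ * V) := by simp only [Matrix.mul_assoc]
        _ ≤ B * V * 1 := prop_mul_le_mul le_rfl h₂
        _ = B * V := Matrix.mul_one _
    · calc B * V = 1 * B * V := by rw [Matrix.one_mul]
        _ ≤ V * Vᵀ * B * V := prop_mul_le_mul (prop_mul_le_mul h₁ le_rfl) le_rfl

variable {𝒜 : Type*}

theorem map_memRingHom_emb (M : Matrix m n Prop) (a : 𝒜) :
    (emb 𝒜 M).map (Set.memRingHom a) = M :=
  rfl

theorem ext_iff_map_memRingHom {M N : Matrix m n (Set 𝒜)} :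
    M = N ↔ ∀ a, M.map (Set.memRingHom a) = N.map (Set.memRingHom a) := by
  refine ⟨fun h a => h ▸ rfl, fun h => Matrix.ext fun i j => Set.ext fun a => ?_⟩
  exact Iff.of_eq (congrFun (congrFun (h a) i) j)

theorem entrywise_le_iff_map_memRingHom {M N : Matrix m n (Set 𝒜)} :
    (∀ i j, M i j ≤ N i j) ↔ ∀ a, M.map (Set.memRingHom a) ≤ N.map (Set.memRingHom a) :=
  ⟨fun h _ i j ha => h i j ha, fun h i j a ha => h a i j ha⟩

end Matrix

theorem strong_bisim_iff_simulation_general {n N : ℕ} {𝒜 : Type*}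
    (A : Matrix (Fin n) (Fin n) (Set 𝒜)) (ρ : Matrix (Fin n) (Fin 1) Prop)
    (V : Matrix (Fin n) (Fin N) Prop)
    (hcol : ∀ i, ∃! j, V i j)
    (R : Matrix (Fin n) (Fin n) Prop) (hR : R = V * Vᵀ) :
    (emb 𝒜 V * emb 𝒜 Vᵀ * A * emb 𝒜 V = A * emb 𝒜 V ∧ V * Vᵀ * ρ = ρ) ↔
      ((∀ i j, (emb 𝒜 R * A) i j ≤ (A * emb 𝒜 R) i j) ∧ ∀ i j, (R * ρ) i j ≤ ρ i j) := by
  subst hR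
  have h₁ : 1 ≤ V * Vᵀ := one_le_mul_transpose fun i => (hcol i).exists
  have h₂ : Vᵀ * V ≤ 1 := transpose_mul_le_one fun i _ _ => (hcol i).unique
  rw [ext_iff_map_memRingHom, entrywise_le_iff_map_memRingHom, mul_eq_self_iff_le h₁]
  simp only [Matrix.map_mul, map_memRingHom_emb]
  exact and_congr_left' (forall_congr' fun _ => mul_transpose_mul_mul_eq_iff _ h₁ h₂)

/-- for a surjective collector `V` and `R = VVᵀ`, the strong-bisimulation
conditions `VVᵀAV = AV` and `VVᵀρ = ρ` hold iff `RA ≤ AR` and `Rρ ≤ ρ` entrywise. -/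
theorem strong_bisim_iff_simulation {n N : ℕ} {𝒜 : Type*}
    (A : Matrix (Fin n) (Fin n) (Set 𝒜)) (ρ : Matrix (Fin n) (Fin 1) Prop)
    (V : Matrix (Fin n) (Fin N) Prop)
    (hcol : ∀ i, ∃! j, V i j) (hsurj : ∀ j, ∃ i, V i j)
    (R : Matrix (Fin n) (Fin n) Prop) (hR : R = V * Vᵀ) :
    (emb 𝒜 V * emb 𝒜 Vᵀ * A * emb 𝒜 V = A * emb 𝒜 V ∧ V * Vᵀ * ρ = ρ) ↔
      ((∀ i j, (emb 𝒜 R * A) i j ≤ (A * emb 𝒜 R) i j) ∧ ∀ i j, (R * ρ) i j ≤ ρ i j) :=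
  strong_bisim_iff_simulation_general A ρ V hcol R hR
end

section
/- Let S be a boolean n×n matrix, V a surjective boolean n×N collector, and Π = S* the reflexive-transitive closure of S. If VVᵀΠV = ΠV, then VᵀΠV = (VᵀSV)*, i.e. the reflexive-transitive closure of the class-level silent-step matrix VᵀSV equals the class-level matrix of the reflexive-transitive closure of S. -/
open Matrix

/-- Reflexive-transitive closure `S* = Σ_{k ≥ 0} S^k` of a boolean matrix. -/
def mstar {n : ℕ} (S : Matrix (Fin n) (Fin n) Prop) : Matrix (Fin n) (Fin n) Prop :=
  Matrix.of fun i j => ∃ k : ℕ, (S ^ k) i j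


lemma prop_sum_eq {α : Type*} (s : Finset α) (f : α → Prop) :
    s.sum f = ∃ a ∈ s, f a := by
  classical
  induction s using Finset.induction_on with
  | empty =>
    rw [Finset.sum_empty]
    apply propext
    exact ⟨fun h => False.elim h, fun ⟨a, ha, _⟩ => absurd ha (Finset.notMem_empty a)⟩
  | @insert a s hnot ih =>
    rw [Finset.sum_insert hnot, ih]
    apply propext
    show f a ∨ (∃ b ∈ s, f b) ↔ _
    constructor
    · rintro (hfa | ⟨b, hb, hfb⟩)
      · exact ⟨a, Finset.mem_insert_self a s, hfa⟩
      · exact ⟨b, Finset.mem_insert_of_mem hb, hfb⟩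
    · rintro ⟨b, hb, hfb⟩
      rcases Finset.mem_insert.mp hb with rfl | hb
      · exact Or.inl hfb
      · exact Or.inr ⟨b, hb, hfb⟩

lemma pmul_apply {m k l : ℕ} (A : Matrix (Fin m) (Fin k) Prop)
    (B : Matrix (Fin k) (Fin l) Prop) (i : Fin m) (j : Fin l) :
    (A * B) i j = ∃ c, A i c ∧ B c j := by
  rw [Matrix.mul_apply, prop_sum_eq]
  apply propext
  constructor
  · rintro ⟨c, _, hc⟩; exact ⟨c, hc⟩
  · rintro ⟨c, hc⟩; exact ⟨c, Finset.mem_univ c, hc⟩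

lemma pone_eq {m : ℕ} {i j : Fin m} (h : (1 : Matrix (Fin m) (Fin m) Prop) i j) :
    i = j := by
  by_cases hij : i = j
  · exact hij
  · rw [Matrix.one_apply_ne hij] at h
    exact False.elim h

lemma pone_refl {m : ℕ} (i : Fin m) : (1 : Matrix (Fin m) (Fin m) Prop) i i := by
  rw [Matrix.one_apply_eq]; trivial

/-- if `VVᵀΠV = ΠV` for `Π = S*`, then `VᵀΠV = (VᵀSV)*`. -/
theorem lumped_closure_eq_closure_lumped {n N : ℕ}
    (S : Matrix (Fin n) (Fin n) Prop) (V : Matrix (Fin n) (Fin N) Prop)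
    (hcol : ∀ i, ∃! j, V i j) (hsurj : ∀ j, ∃ i, V i j)
    (h : V * Vᵀ * mstar S * V = mstar S * V) :
    Vᵀ * mstar S * V = mstar (Vᵀ * S * V) := by
  set T := Vᵀ * S * V with hT
  -- forward: Vᵀ S^k V entries reach T^k
  have lem1 : ∀ (k : ℕ) (i j : Fin n) (a b : Fin N),
      V i a → (S ^ k) i j → V j b → ∃ m, (T ^ m) a b := by
    intro k
    induction k with
    | zero =>
      intro i j a b hia hij hjb
      rw [pow_zero] at hij
      cases pone_eq hij
      obtain ⟨c, _, huniq⟩ := hcol i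
      have : a = b := (huniq a hia).trans (huniq b hjb).symm
      cases this
      exact ⟨0, by rw [pow_zero]; exact pone_refl a⟩
    | succ k ih =>
      intro i j a b hia hij hjb
      rw [pow_succ', pmul_apply] at hij
      obtain ⟨m', hSm, hSk⟩ := hij
      obtain ⟨c, hm'c, _⟩ := hcol m'
      obtain ⟨m, hTm⟩ := ih m' j c b hm'c hSk hjb
      refine ⟨m + 1, ?_⟩
      rw [pow_succ', pmul_apply]
      refine ⟨c, ?_, hTm⟩
      rw [hT, pmul_apply]
      exact ⟨m', by rw [pmul_apply]; exact ⟨i, hia, hSm⟩, hm'c⟩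
  -- backward: T^m entries reach Vᵀ (mstar S) V
  have lem2 : ∀ (m : ℕ) (a b : Fin N), (T ^ m) a b → (Vᵀ * mstar S * V) a b := by
    intro m
    induction m with
    | zero =>
      intro a b hab
      rw [pow_zero] at hab
      cases pone_eq hab
      obtain ⟨i, hia⟩ := hsurj a
      rw [pmul_apply]
      refine ⟨i, ?_, hia⟩
      rw [pmul_apply]
      exact ⟨i, hia, ⟨0, by rw [pow_zero]; exact pone_refl i⟩⟩
    | succ m ih =>
      intro a b hab
      rw [pow_succ', pmul_apply] at hab
      obtain ⟨c, hTac, hTm⟩ := hab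
      rw [hT, pmul_apply] at hTac
      obtain ⟨m', hVSa, hm'c⟩ := hTac
      rw [pmul_apply] at hVSa
      obtain ⟨i, hia, hSim'⟩ := hVSa
      have hihs := ih c b hTm
      rw [pmul_apply] at hihs
      obtain ⟨l, hVP, hlb⟩ := hihs
      rw [pmul_apply] at hVP
      obtain ⟨j, hjc, hPjl⟩ := hVP
      -- (V Vᵀ Π V) m' b holds
      have hmem : (V * Vᵀ * mstar S * V) m' b := by
        rw [pmul_apply]
        refine ⟨l, ?_, hlb⟩
        rw [pmul_apply]
        refine ⟨j, ?_, hPjl⟩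
        rw [pmul_apply]
        exact ⟨c, hm'c, hjc⟩
      rw [h, pmul_apply] at hmem
      obtain ⟨l', hPm'l', hl'b⟩ := hmem
      obtain ⟨k', hSk'⟩ := hPm'l'
      rw [pmul_apply]
      refine ⟨l', ?_, hl'b⟩
      rw [pmul_apply]
      refine ⟨i, hia, ⟨k' + 1, ?_⟩⟩
      rw [pow_succ', pmul_apply]
      exact ⟨m', hSim', hSk'⟩
  ext a b
  constructor
  · intro hab
    rw [pmul_apply] at hab
    obtain ⟨j, hVP, hjb⟩ := hab
    rw [pmul_apply] at hVP
    obtain ⟨i, hia, ⟨k, hSk⟩⟩ := hVP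
    exact lem1 k i j a b hia hSk hjb
  · intro hst
    obtain ⟨m, hTm⟩ : ∃ m : ℕ, (T ^ m) a b := hst
    exact lem2 m a b hTm
end

section
/- Let Q ∈ ℝ^{n×n}, ρ ∈ ℝ^{n×1}, let V ∈ ℝ^{n×N} be a collector matrix, and let U, U' ∈ ℝ^{N×n} be distributors for V (U·1 = 1, UV = I, and likewise for U'). If VUQV = QV and VUρ = ρ, then VU'QV = QV, VU'ρ = ρ, U'QV = UQV, and U'ρ = Uρ. Hence the strong-bisimulation (ordinary lumping) conditions and the lumped chain (UQV, Uρ) are independent of the choice of distributor. -/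
open Matrix

/-- The all-ones real column vector. -/
def onesR (n : ℕ) : Matrix (Fin n) (Fin 1) ℝ := Matrix.of fun _ _ => 1

/-- A real matrix is a collector if every entry is 0 or 1 and every row
contains exactly one 1. -/
def IsCollectorR {n N : ℕ} (V : Matrix (Fin n) (Fin N) ℝ) : Prop :=
  (∀ i j, V i j = 0 ∨ V i j = 1) ∧ ∀ i, ∃! j, V i j = 1

/-! `V * U * X = X` says that `X = V * (U * X)` factors through `V`, so every left inverse `U'`
of `V` agrees with `U` on `X`: `U' * X = (U' * V) * (U * X) = U * X`. Take `X = Q * V` and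
`X = ρ`. -/

namespace Matrix

variable {ι κ μ R : Type*} [Fintype ι] [Fintype κ] [DecidableEq κ] [Semiring R]
  {V : Matrix ι κ R} {U U' : Matrix κ ι R} {X : Matrix ι μ R}

theorem mul_eq_mul_of_mul_eq_one_of_mul_mul_eq (hU' : U' * V = 1) (hX : V * U * X = X) :
    U' * X = U * X :=
  calc U' * X = U' * V * (U * X) := by rw [Matrix.mul_assoc, ← Matrix.mul_assoc V, hX]
    _ = U * X := by rw [hU', Matrix.one_mul]

theorem mul_mul_eq_of_mul_eq_one_of_mul_mul_eq (hU' : U' * V = 1) (hX : V * U * X = X) :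
    V * U' * X = X := by
  rw [Matrix.mul_assoc, mul_eq_mul_of_mul_eq_one_of_mul_mul_eq hU' hX, ← Matrix.mul_assoc, hX]

end Matrix

theorem mrc_strong_bisim_distributor_irrelevant_general {n N : ℕ}
    (Q : Matrix (Fin n) (Fin n) ℝ) (ρ : Matrix (Fin n) (Fin 1) ℝ)
    (V : Matrix (Fin n) (Fin N) ℝ) (U U' : Matrix (Fin N) (Fin n) ℝ)
    (hU'₂ : U' * V = 1)
    (hQ : V * U * Q * V = Q * V) (hρ : V * U * ρ = ρ) :
    V * U' * Q * V = Q * V ∧ V * U' * ρ = ρ ∧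
      U' * Q * V = U * Q * V ∧ U' * ρ = U * ρ := by
  rw [Matrix.mul_assoc (V * U) Q V] at hQ
  simp only [Matrix.mul_assoc _ Q V]
  exact ⟨mul_mul_eq_of_mul_eq_one_of_mul_mul_eq hU'₂ hQ,
    mul_mul_eq_of_mul_eq_one_of_mul_mul_eq hU'₂ hρ,
    mul_eq_mul_of_mul_eq_one_of_mul_mul_eq hU'₂ hQ,
    mul_eq_mul_of_mul_eq_one_of_mul_mul_eq hU'₂ hρ⟩

/-- the ordinary-lumping conditions and the lumped chain are
independent of the choice of distributor. -/
theorem mrc_strong_bisim_distributor_irrelevant {n N : ℕ}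
    (Q : Matrix (Fin n) (Fin n) ℝ) (ρ : Matrix (Fin n) (Fin 1) ℝ)
    (V : Matrix (Fin n) (Fin N) ℝ) (U U' : Matrix (Fin N) (Fin n) ℝ)
    (hV : IsCollectorR V)
    (hU₁ : U * onesR n = onesR N) (hU₂ : U * V = 1)
    (hU'₁ : U' * onesR n = onesR N) (hU'₂ : U' * V = 1)
    (hQ : V * U * Q * V = Q * V) (hρ : V * U * ρ = ρ) :
    V * U' * Q * V = Q * V ∧ V * U' * ρ = ρ ∧
      U' * Q * V = U * Q * V ∧ U' * ρ = U * ρ :=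
  mrc_strong_bisim_distributor_irrelevant_general Q ρ V U U' hU'₂ hQ hρ
end

section
/- Let Q ∈ ℝ^{n×n}, let V ∈ ℝ^{n×N} be a collector matrix, and let U ∈ ℝ^{N×n} satisfy UV = I. If VUQV = QV, then for every natural number k, Q^k V = V (UQV)^k, and consequently exp(tQ)·V = V·exp(t·UQV) for every real t, where exp denotes the matrix exponential. -/
open Matrix

open NormedSpace

namespace Matrix

variable {m p : Type*} [Fintype m] [DecidableEq m] [Fintype p] [DecidableEq p]

theorem pow_mul_eq_mul_pow_of_mul_eq_mul {α : Type*} [Semiring α]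
    {A : Matrix m m α} {B : Matrix p p α} {V : Matrix m p α} (h : A * V = V * B) (k : ℕ) :
    A ^ k * V = V * B ^ k := by
  induction k with
  | zero => simp
  | succ k ih =>
    calc A ^ (k + 1) * V = A ^ k * (A * V) := by rw [pow_succ, Matrix.mul_assoc]
      _ = V * B ^ k * B := by rw [h, ← Matrix.mul_assoc, ih]
      _ = V * B ^ (k + 1) := by rw [pow_succ, Matrix.mul_assoc]

variable {𝕂 : Type*} [RCLike 𝕂]

-- Matrices carry no global norm; the series is summed in the `L∞` operator norm, which is
-- complete by finite-dimensionality and induces the usual topology.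
theorem exp_series_hasSum_exp' (A : Matrix m m 𝕂) :
    HasSum (fun k => (k.factorial⁻¹ : 𝕂) • A ^ k) (exp A) :=
  open scoped Norms.Operator in
  haveI : CompleteSpace (Matrix m m 𝕂) := FiniteDimensional.complete 𝕂 _
  NormedSpace.exp_series_hasSum_exp' A

theorem exp_mul_eq_mul_exp_of_mul_eq_mul
    {A : Matrix m m 𝕂} {B : Matrix p p 𝕂} {V : Matrix m p 𝕂} (h : A * V = V * B) :
    exp A * V = V * exp B := by
  have hAV := (exp_series_hasSum_exp' A).map (addMonoidHomMulRight V)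
    (continuous_id.matrix_mul continuous_const)
  have hVB := (exp_series_hasSum_exp' B).map (addMonoidHomMulLeft V)
    (continuous_const.matrix_mul continuous_id)
  refine hAV.unique (hVB.congr_fun fun k => ?_)
  simp [Matrix.smul_mul, Matrix.mul_smul, pow_mul_eq_mul_pow_of_mul_eq_mul h]

end Matrix

theorem mrc_pow_and_exp_commute_with_lumping_general {n N : ℕ}
    (Q : Matrix (Fin n) (Fin n) ℝ) (V : Matrix (Fin n) (Fin N) ℝ)
    (U : Matrix (Fin N) (Fin n) ℝ)
    (h : V * U * Q * V = Q * V) :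
    (∀ k : ℕ, Q ^ k * V = V * (U * Q * V) ^ k) ∧
    ∀ t : ℝ, NormedSpace.exp (t • Q) * V = V * NormedSpace.exp (t • (U * Q * V)) := by
  have hQV : Q * V = V * (U * Q * V) := by rw [← h]; simp only [Matrix.mul_assoc]
  refine ⟨pow_mul_eq_mul_pow_of_mul_eq_mul hQV, fun t => exp_mul_eq_mul_exp_of_mul_eq_mul ?_⟩
  rw [Matrix.smul_mul, Matrix.mul_smul, hQV]

/-- if `VUQV = QV` then `Q^k V = V (UQV)^k` for all `k`, and
consequently `exp(tQ)·V = V·exp(t·UQV)` for every real `t`. -/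
theorem mrc_pow_and_exp_commute_with_lumping {n N : ℕ}
    (Q : Matrix (Fin n) (Fin n) ℝ) (V : Matrix (Fin n) (Fin N) ℝ)
    (U : Matrix (Fin N) (Fin n) ℝ)
    (hV : IsCollectorR V) (hUV : U * V = 1)
    (h : V * U * Q * V = Q * V) :
    (∀ k : ℕ, Q ^ k * V = V * (U * Q * V) ^ k) ∧
    ∀ t : ℝ, NormedSpace.exp (t • Q) * V = V * NormedSpace.exp (t • (U * Q * V)) :=
  mrc_pow_and_exp_commute_with_lumping_general Q V U h
end

section
/- Let Q ∈ ℝ^{n×n} be a generator matrix, let V ∈ ℝ^{n×N} be a collector matrix each of whose columns contains at least one 1, and let U ∈ ℝ^{N×n} be a distributor for V. If VUQV = QV, then the lumped matrix UQV ∈ ℝ^{N×N} is again a generator matrix: all its off-diagonal entries are nonnegative and each of its rows sums to zero. -/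
open Matrix

/-- A generator matrix: off-diagonal entries nonnegative, every row sums to zero. -/
def IsGenerator {n : ℕ} (Q : Matrix (Fin n) (Fin n) ℝ) : Prop :=
  (∀ i j, i ≠ j → 0 ≤ Q i j) ∧ ∀ i, ∑ j, Q i j = 0

/-!
Since each row of `V` sums to one, the row sums of `UQV` are those of `UQ`, which vanish with those
of `Q`. For `k ≠ l`, pick a state `i` in block `k`; row `i` of `V` is the unit vector at `k`, so
`(UQV) k l = (VUQV) i l = (QV) i l = ∑ j, Q i j * V j l`, where the diagonal term vanishes because
`i` is not in block `l` and all other terms are nonnegative.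
-/

lemma Matrix.sum_mul_apply_eq {m n p : Type*} [Fintype n] [Fintype p]
    (A : Matrix m n ℝ) (B : Matrix n p ℝ) (i : m) :
    ∑ l, (A * B) i l = ∑ j, A i j * ∑ l, B j l := by
  simp only [mul_apply, Finset.mul_sum]
  exact Finset.sum_comm

namespace IsCollectorR

variable {n N : ℕ} {V : Matrix (Fin n) (Fin N) ℝ}

lemma nonneg (hV : IsCollectorR V) (i : Fin n) (j : Fin N) : 0 ≤ V i j := by
  rcases hV.1 i j with h | h <;> simp [h]

lemma eq_zero_of_ne (hV : IsCollectorR V) {i : Fin n} {j k : Fin N} (hk : V i k = 1)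
    (hjk : j ≠ k) : V i j = 0 :=
  (hV.1 i j).resolve_right fun hj => hjk ((hV.2 i).unique hj hk)

lemma sum_row (hV : IsCollectorR V) (i : Fin n) : ∑ j, V i j = 1 := by
  obtain ⟨k, hk, -⟩ := hV.2 i
  rw [Finset.sum_eq_single k (fun j _ hjk => hV.eq_zero_of_ne hk hjk) (by simp), hk]

lemma mul_apply_of_eq_one {α : Type*} (hV : IsCollectorR V) {i : Fin n} {k : Fin N}
    (hk : V i k = 1) (M : Matrix (Fin N) α ℝ) (l : α) : (V * M) i l = M k l := by
  rw [mul_apply, Finset.sum_eq_single k (fun j _ hjk => by rw [hV.eq_zero_of_ne hk hjk, zero_mul])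
    (by simp), hk, one_mul]

end IsCollectorR

namespace IsGenerator

variable {n : ℕ} {Q : Matrix (Fin n) (Fin n) ℝ}

lemma sum_mul_apply {m : Type*} (hQ : IsGenerator Q) (A : Matrix m (Fin n) ℝ) (i : m) :
    ∑ j, (A * Q) i j = 0 := by
  simp [Matrix.sum_mul_apply_eq, hQ.2]

lemma mul_apply_nonneg {α : Type*} (hQ : IsGenerator Q) {W : Matrix (Fin n) α ℝ}
    (hW : ∀ j l, 0 ≤ W j l) {i : Fin n} {l : α} (hil : W i l = 0) : 0 ≤ (Q * W) i l := by
  rw [mul_apply]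
  refine Finset.sum_nonneg fun j _ => ?_
  rcases eq_or_ne i j with rfl | hij
  · simp [hil]
  · exact mul_nonneg (hQ.1 i j hij) (hW j l)

end IsGenerator

theorem mrc_lumped_is_generator_general {n N : ℕ}
    (Q : Matrix (Fin n) (Fin n) ℝ) (V : Matrix (Fin n) (Fin N) ℝ)
    (U : Matrix (Fin N) (Fin n) ℝ)
    (hQ : IsGenerator Q) (hV : IsCollectorR V) (hsurj : ∀ j, ∃ i, V i j = 1)
    (h : V * U * Q * V = Q * V) :
    IsGenerator (U * Q * V) := by
  refine ⟨fun k l hkl => ?_, fun k => ?_⟩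
  · obtain ⟨i, hik⟩ := hsurj k
    have hlump : (U * Q * V) k l = (Q * V) i l := by
      rw [← hV.mul_apply_of_eq_one hik (U * Q * V), ← h]
      simp only [Matrix.mul_assoc]
    rw [hlump]
    exact hQ.mul_apply_nonneg hV.nonneg (hV.eq_zero_of_ne hik hkl.symm)
  · rw [Matrix.sum_mul_apply_eq]
    simpa [hV.sum_row] using hQ.sum_mul_apply U k

/-- the lumped matrix `UQV` of a generator matrix is again a
generator matrix. -/
theorem mrc_lumped_is_generator {n N : ℕ}
    (Q : Matrix (Fin n) (Fin n) ℝ) (V : Matrix (Fin n) (Fin N) ℝ)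
    (U : Matrix (Fin N) (Fin n) ℝ)
    (hQ : IsGenerator Q) (hV : IsCollectorR V) (hsurj : ∀ j, ∃ i, V i j = 1)
    (hU₁ : U * onesR n = onesR N) (hU₂ : U * V = 1)
    (h : V * U * Q * V = Q * V) :
    IsGenerator (U * Q * V) :=
  mrc_lumped_is_generator_general Q V U hQ hV hsurj h
end
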